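/- arXiv:2101.07276 — 2 statements merged into one kernel-verified Lean document; each statement's English description precedes it below -/
import Mathlib

section
/- Let A = ∏_{k∈S} σ^x_k for a subset S ⊆ {1,…,L} of odd cardinality, where 1 ≤ L ≤ N, and set c = ∏_{k∈S}(−1)^k ∈ {−1,+1}. Then ⟨s_{p_1}| A |s_{p_2}⟩ = −c·e^{−i(p_1−p_2)/2}/(N·cos((p_1−p_2)/2)) + ξ_N, where the correction satisfies |ξ_N| ≤ 2(L−1)/N. -/
/-!
In the kink basis `∏_{k∈S} σ^x_k` is diagonal. On a kink `|m⟩` with `m ≥ L` (all of `S` left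
of the ferromagnetic bond) its eigenvalue is `∏_{k∈S} (-1)^(m+k) = (-1)^m c`, as `|S|` is odd.
Only the `L - 1` kinks with `m < L` deviate from this, each by at most `2`. Up to an error of
norm at most `2(L-1)/N` the matrix element is therefore `c/N` times the alternating geometric
sum `∑_{m=1}^N (-z)^m` with `z = e^{i(p₂-p₁)}`. As `z^N = 1` and `N` is odd, `(-z)^N = -1`, so
the sum equals `-2z/(1+z) = -e^{-i(p₁-p₂)/2} / cos((p₁-p₂)/2)`.
-/

open Complex BigOperators Finset

namespace SpinChain

/-- Spin configurations on `N` sites (sites mod `N`): `true` = +1, `false` = −1. -/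
abbrev Config (N : ℕ) := ZMod N → Bool

/-- The Hilbert space `H_N`: complex functions on spin configurations. -/
abbrev HS (N : ℕ) := Config N → ℂ

/-- The ±1 value of a spin. -/
def sgn (b : Bool) : ℂ := if b then 1 else -1

/-- Standard basis vector `e_s`. -/
def basis (N : ℕ) [NeZero N] (s : Config N) : HS N := fun t => if t = s then 1 else 0

/-- Inner product `⟨f|g⟩ = ∑_s conj (f s) * g s` (antilinear in the first argument). -/
noncomputable def braket (N : ℕ) [NeZero N] (f g : HS N) : ℂ :=
  ∑ s, (starRingEnd ℂ) (f s) * g s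

/-- Flip the spin at site `j`. -/
def flipAt (N : ℕ) (j : ZMod N) (s : Config N) : Config N :=
  Function.update s j (!(s j))

/-- Pauli operator σ^x_j : acts diagonally, `σ^x_j e_s = s(j) e_s`. -/
def sigmaX (N : ℕ) (j : ZMod N) : Module.End ℂ (HS N) where
  toFun f := fun s => sgn (s j) * f s
  map_add' f g := by funext s; simp [mul_add]
  map_smul' c f := by funext s; simp [smul_eq_mul]; ring

/-- Pauli operator σ^z_j : flips the spin at site `j`, `σ^z_j e_s = e_{s'}`. -/
def sigmaZ (N : ℕ) (j : ZMod N) : Module.End ℂ (HS N) where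
  toFun f := fun s => f (flipAt N j s)
  map_add' _ _ := rfl
  map_smul' _ _ := rfl

/-- Pauli operator σ^y_j = i σ^x_j σ^z_j. -/
noncomputable def sigmaY (N : ℕ) (j : ZMod N) : Module.End ℂ (HS N) :=
  Complex.I • (sigmaX N j * sigmaZ N j)

/-- Kinds of single-site operators: the identity and the three Pauli matrices. -/
inductive PKind | id | x | y | z
  deriving DecidableEq

/-- Single-site operator of a given kind at site `j`. -/
noncomputable def pauli (N : ℕ) : PKind → ZMod N → Module.End ℂ (HS N)
  | PKind.id => fun _ => 1
  | PKind.x => sigmaX N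
  | PKind.y => sigmaY N
  | PKind.z => sigmaZ N

/-- Parity operator Π^α = σ^α_1 σ^α_2 ⋯ σ^α_N. -/
noncomputable def parity (N : ℕ) (α : PKind) : Module.End ℂ (HS N) :=
  ((List.range N).map (fun j => pauli N α ((j + 1 : ℕ) : ZMod N))).prod

/-- The configuration of the kink state |j⟩: `s(j+r) = (−1)^{r+1}` for `r = 1,…,N`
(the single ferromagnetic bond is between sites `j` and `j+1`). -/
def kinkConfig (N : ℕ) (j : ZMod N) : Config N :=
  fun k => ((k - j).val == 0) || ((k - j).val % 2 == 1)

/-- Kink state |j⟩. -/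
def kink (N : ℕ) [NeZero N] (j : ZMod N) : HS N := basis N (kinkConfig N j)

/-- Momentum state `|s_p⟩ = N^{-1/2} ∑_{j=1}^N e^{i p j} |j⟩`. -/
noncomputable def momState (N : ℕ) [NeZero N] (p : ℝ) : HS N :=
  (Real.sqrt N : ℂ)⁻¹ • ∑ j ∈ Finset.range N,
    Complex.exp (Complex.I * p * ((j : ℂ) + 1)) • kink N ((j + 1 : ℕ) : ZMod N)

open ComplexConjugate

variable {N : ℕ}

@[simp]
lemma sigmaX_apply (j : ZMod N) (f : HS N) (s : Config N) :
    sigmaX N j f s = sgn (s j) * f s := rfl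

lemma norm_sgn (b : Bool) : ‖sgn b‖ = 1 := by
  cases b <;> simp [sgn]

lemma sgn_decide_even (n : ℕ) : sgn (decide (Even n)) = (-1) ^ n := by
  rcases Nat.even_or_odd n with h | h
  · simp [sgn, h, h.neg_one_pow]
  · simp [sgn, Nat.not_even_iff_odd.mpr h, h.neg_one_pow]

lemma list_prod_map_sigmaX_apply (l : List (ZMod N)) (f : HS N) (s : Config N) :
    (l.map (sigmaX N)).prod f s = (l.map fun j => sgn (s j)).prod * f s := by
  induction l with
  | nil => simp
  | cons j l ih => simp [ih, mul_assoc]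

-- The coercion `List ℕ → List (ZMod N)` is the monadic lift `l >>= pure ∘ Nat.cast`.
lemma list_prod_map_sort_natCast {M : Type*} [CommMonoid M] (S : Finset ℕ) (g : ZMod N → M) :
    (((S.sort (· ≤ ·)) : List (ZMod N)).map g).prod = ∏ k ∈ S, g k := by
  rw [bind_pure_comp, List.map_eq_map, List.map_map, ← Multiset.prod_coe, ← Multiset.map_coe,
    sort_eq]
  rfl

def sgnProd (S : Finset ℕ) (s : Config N) : ℂ := ∏ k ∈ S, sgn (s k)

lemma norm_sgnProd (S : Finset ℕ) (s : Config N) : ‖sgnProd S s‖ = 1 := by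
  simp [sgnProd, norm_prod, norm_sgn]

lemma sortedProd_sigmaX_apply (S : Finset ℕ) (f : HS N) (s : Config N) :
    (((S.sort (· ≤ ·)) : List (ZMod N)).map (sigmaX N)).prod f s = sgnProd S s * f s := by
  rw [list_prod_map_sigmaX_apply, list_prod_map_sort_natCast, sgnProd]

lemma val_natCast_sub_natCast {k m : ℕ} (hkN : k ≤ N) (hm : 1 ≤ m) (hmN : m ≤ N) :
    ((k : ZMod N) - m).val = if k < m then k + N - m else k - m := by
  split_ifs with h
  · rw [show (k : ZMod N) - m = ((k + N - m : ℕ) : ZMod N) by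
        simp [Nat.cast_sub (by omega : m ≤ k + N)],
      ZMod.val_natCast_of_lt (by omega)]
  · rw [← Nat.cast_sub (by omega), ZMod.val_natCast_of_lt (by omega)]

lemma kinkConfig_natCast (hN : Odd N) {k m : ℕ} (hk : 1 ≤ k) (hkN : k ≤ N)
    (hm : 1 ≤ m) (hmN : m ≤ N) :
    kinkConfig N m k = decide (Even (m + k + if k ≤ m then 0 else 1)) := by
  obtain ⟨t, rfl⟩ := hN
  simp only [kinkConfig, val_natCast_sub_natCast hkN hm hmN]
  split_ifs <;> rw [Bool.eq_iff_iff] <;>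
    simp only [beq_iff_eq, Bool.or_eq_true, decide_eq_true_eq, add_zero, Nat.even_iff] <;> omega

lemma sgn_kinkConfig_natCast_of_le (hN : Odd N) {k m : ℕ} (hk : 1 ≤ k) (hkm : k ≤ m)
    (hm : 1 ≤ m) (hmN : m ≤ N) :
    sgn (kinkConfig N m k) = (-1) ^ (m + k) := by
  rw [kinkConfig_natCast hN hk (hkm.trans hmN) hm hmN, if_pos hkm, add_zero, sgn_decide_even]

lemma kinkConfig_natCast_injOn (hN : Odd N) :
    Set.InjOn (fun m : ℕ => kinkConfig N m) (Set.Icc 1 N) := by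
  suffices h : ∀ i j : ℕ, 1 ≤ i → i < j → j ≤ N → kinkConfig N i ≠ kinkConfig N j by
    intro i hi j hj hij
    rcases lt_trichotomy i j with hlt | heq | hgt
    · exact absurd hij (h i j hi.1 hlt hj.2)
    · exact heq
    · exact absurd hij.symm (h j i hj.1 hgt hi.2)
  intro i j hi hij hjN hkink
  have h1 := congrFun hkink (i : ZMod N)
  have h2 := congrFun hkink ((i + 1 : ℕ) : ZMod N)
  rw [kinkConfig_natCast hN (by omega) (by omega) hi (by omega),
    kinkConfig_natCast hN (by omega) (by omega) (by omega) hjN] at h1 h2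
  simp [hij, hij.le, Nat.even_iff] at h1 h2
  omega

section Braket

variable [NeZero N]

lemma braket_basis_left (s : Config N) (g : HS N) : braket N (basis N s) g = g s := by
  simp [braket, basis]

lemma braket_smul_left (a : ℂ) (f g : HS N) : braket N (a • f) g = conj a * braket N f g := by
  simp [braket, mul_sum, mul_assoc]

lemma braket_sum_left {ι : Type*} (t : Finset ι) (f : ι → HS N) (g : HS N) :
    braket N (∑ i ∈ t, f i) g = ∑ i ∈ t, braket N (f i) g := by
  simp only [braket, Finset.sum_apply, map_sum, sum_mul]
  exact sum_comm

lemma braket_momState_left (p : ℝ) (g : HS N) :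
    braket N (momState N p) g = (Real.sqrt N : ℂ)⁻¹ * ∑ j ∈ range N,
      conj (exp (I * p * ((j : ℂ) + 1))) * g (kinkConfig N ((j + 1 : ℕ) : ZMod N)) := by
  simp [momState, kink, braket_smul_left, braket_sum_left, braket_basis_left, conj_ofReal]

lemma momState_kinkConfig (hN : Odd N) (p : ℝ) {j : ℕ} (hj : j < N) :
    momState N p (kinkConfig N ((j + 1 : ℕ) : ZMod N)) =
      (Real.sqrt N : ℂ)⁻¹ * exp (I * p * ((j : ℂ) + 1)) := by
  simp only [momState, Pi.smul_apply, Finset.sum_apply, kink, basis, smul_eq_mul, mul_ite, mul_one,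
    mul_zero]
  rw [sum_eq_single j]
  · simp
  · intro i hi hij
    have hi' := mem_range.mp hi
    rw [if_neg]
    intro h
    have := kinkConfig_natCast_injOn hN ⟨by omega, by omega⟩ ⟨by omega, by omega⟩ h
    omega
  · simp [hj]

lemma conj_exp_mul_exp (p₁ p₂ : ℝ) (n : ℕ) :
    conj (exp (I * p₁ * n)) * exp (I * p₂ * n) = exp (I * (p₂ - p₁)) ^ n := by
  rw [← exp_conj, ← exp_add, ← exp_nat_mul]
  congr 1
  simp [conj_ofReal]
  ring

lemma braket_momState_diagonal (hN : Odd N) (p₁ p₂ : ℝ) (D : Config N → ℂ) :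
    braket N (momState N p₁) (fun s => D s * momState N p₂ s) =
      (N : ℂ)⁻¹ * ∑ j ∈ range N,
        exp (I * (p₂ - p₁)) ^ (j + 1) * D (kinkConfig N ((j + 1 : ℕ) : ZMod N)) := by
  have hsqrt : (Real.sqrt N : ℂ)⁻¹ * (Real.sqrt N : ℂ)⁻¹ = (N : ℂ)⁻¹ := by
    rw [← mul_inv, ← ofReal_mul, Real.mul_self_sqrt (Nat.cast_nonneg N), ofReal_natCast]
  rw [braket_momState_left, ← hsqrt, mul_assoc]
  simp only [mul_sum]
  refine sum_congr rfl fun j hj => ?_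
  rw [momState_kinkConfig hN p₂ (mem_range.mp hj), ← conj_exp_mul_exp]
  push_cast
  ring

lemma braket_momState_sortedProd_sigmaX (hN : Odd N) (S : Finset ℕ) (p₁ p₂ : ℝ) :
    braket N (momState N p₁)
      ((((S.sort (· ≤ ·)) : List (ZMod N)).map (sigmaX N)).prod (momState N p₂)) =
      (N : ℂ)⁻¹ * ∑ j ∈ range N,
        exp (I * (p₂ - p₁)) ^ (j + 1) * sgnProd S (kinkConfig N ((j + 1 : ℕ) : ZMod N)) := by
  rw [← braket_momState_diagonal hN]
  congr 1
  funext s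
  exact sortedProd_sigmaX_apply S _ s

end Braket

lemma exp_I_mul_pow_eq_one [NeZero N] {p : ℝ} {k : ℤ} (hp : p = 2 * Real.pi * k / N) :
    exp (I * p) ^ N = 1 := by
  rw [← exp_nat_mul, exp_eq_one_iff]
  refine ⟨k, ?_⟩
  have hN : (N : ℂ) ≠ 0 := Nat.cast_ne_zero.mpr (NeZero.ne N)
  rw [hp]
  push_cast
  field_simp

lemma one_add_ne_zero_of_pow_eq_one (hN : Odd N) {z : ℂ} (hz : z ^ N = 1) : 1 + z ≠ 0 := by
  intro h
  rw [eq_neg_of_add_eq_zero_right h, hN.neg_one_pow] at hz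
  norm_num at hz

lemma sum_range_neg_pow_succ (hN : Odd N) {z : ℂ} (hz : z ^ N = 1) :
    ∑ j ∈ range N, (-z) ^ (j + 1) = -2 * z / (1 + z) := by
  have hz' := one_add_ne_zero_of_pow_eq_one hN hz
  have hq : -z ≠ 1 := fun h => hz' (by rw [← h]; ring)
  simp only [pow_succ, ← sum_mul, geom_sum_eq hq, hN.neg_pow, hz]
  field_simp
  ring

lemma one_add_exp_neg_mul_I_sq (θ : ℝ) :
    1 + exp (-(θ * I)) ^ 2 = 2 * exp (-(θ * I)) * Real.cos θ := by
  have h1 : exp (-(θ * I)) * exp (θ * I) = 1 := by rw [← exp_add, neg_add_cancel, exp_zero]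
  rw [ofReal_cos, cos, neg_mul]
  linear_combination -h1

lemma sum_range_exp_pow_mul_neg_one_pow (hN : Odd N) {p₁ p₂ : ℝ}
    (hz : exp (I * (p₂ - p₁)) ^ N = 1) :
    ∑ j ∈ range N, exp (I * (p₂ - p₁)) ^ (j + 1) * (-1) ^ (j + 1) =
      -exp (-(I * (p₁ - p₂) / 2)) / Real.cos ((p₁ - p₂) / 2) := by
  set θ : ℝ := (p₁ - p₂) / 2
  have hv : exp (-(I * (p₁ - p₂) / 2)) = exp (-(θ * I)) := by simp only [θ]; push_cast; ring_nf
  have hzv : exp (I * (p₂ - p₁)) = exp (-(θ * I)) ^ 2 := by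
    rw [← exp_nat_mul]; simp only [θ]; push_cast; ring_nf
  rw [hzv] at hz ⊢
  have hcos : (Real.cos θ : ℂ) ≠ 0 := fun h =>
    one_add_ne_zero_of_pow_eq_one hN hz (by rw [one_add_exp_neg_mul_I_sq, h, mul_zero])
  simp only [← mul_pow, mul_neg_one]
  rw [sum_range_neg_pow_succ hN hz, one_add_exp_neg_mul_I_sq, hv]
  field_simp

lemma norm_sum_range_le_of_eq_zero {E : Type*} [SeminormedAddCommGroup E] {f : ℕ → E}
    {n N : ℕ} {M : ℝ} (hf : ∀ j < N, n ≤ j → f j = 0) (hM : ∀ j, ‖f j‖ ≤ M) :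
    ‖∑ j ∈ range N, f j‖ ≤ n * M := by
  have hsupp : ∑ j ∈ range N with j < n, f j = ∑ j ∈ range N, f j :=
    sum_filter_of_ne fun j hj hne => not_le.mp fun h => hne (hf j (mem_range.mp hj) h)
  have hcard : #{j ∈ range N | j < n} ≤ n :=
    (card_le_card fun j hj => by simp at hj ⊢; omega).trans (card_range n).le
  rw [← hsupp]
  calc ‖∑ j ∈ range N with j < n, f j‖ ≤ ∑ j ∈ range N with j < n, M :=
        norm_sum_le_of_le _ fun j _ => hM j
    _ = #{j ∈ range N | j < n} * M := by rw [sum_const, nsmul_eq_mul]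
    _ ≤ n * M := by
        have hM0 : 0 ≤ M := (norm_nonneg _).trans (hM 0)
        gcongr

lemma sgnProd_kinkConfig_of_le (hN : Odd N) {S : Finset ℕ} (hScard : Odd S.card)
    {m : ℕ} (hm : 1 ≤ m) (hmN : m ≤ N) (hS : ∀ k ∈ S, 1 ≤ k ∧ k ≤ m) :
    sgnProd S (kinkConfig N m) = (-1) ^ m * ∏ k ∈ S, (-1 : ℂ) ^ k := by
  rw [sgnProd, prod_congr rfl fun k hk =>
    sgn_kinkConfig_natCast_of_le hN (hS k hk).1 (hS k hk).2 hm hmN]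
  simp only [pow_add, prod_mul_distrib, prod_const]
  rw [← pow_mul, mul_comm m, pow_mul, hScard.neg_one_pow, mul_comm]

lemma norm_sum_sgnProd_kinkConfig_sub_le (hN : Odd N) {L : ℕ} (hL1 : 1 ≤ L)
    {S : Finset ℕ} (hS : S ⊆ Icc 1 L) (hScard : Odd S.card) {z : ℂ} (hz : ‖z‖ = 1) :
    ‖∑ j ∈ range N, z ^ (j + 1) * (sgnProd S (kinkConfig N ((j + 1 : ℕ) : ZMod N)) -
      (-1) ^ (j + 1) * ∏ k ∈ S, (-1 : ℂ) ^ k)‖ ≤ 2 * ((L : ℝ) - 1) := by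
  have hbound := norm_sum_range_le_of_eq_zero (N := N) (n := L - 1) (M := 2)
    (f := fun j => z ^ (j + 1) * (sgnProd S (kinkConfig N ((j + 1 : ℕ) : ZMod N)) -
      (-1) ^ (j + 1) * ∏ k ∈ S, (-1 : ℂ) ^ k))
    (fun j hjN hLj => by
      rw [sgnProd_kinkConfig_of_le hN hScard (by omega) (by omega) fun k hk => by
        have := mem_Icc.mp (hS hk); omega, sub_self, mul_zero])
    (fun j => by
      rw [norm_mul, norm_pow, hz, one_pow, one_mul]
      calc _ ≤ ‖sgnProd S _‖ + ‖(-1) ^ (j + 1) * ∏ k ∈ S, (-1 : ℂ) ^ k‖ := norm_sub_le _ _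
        _ = 2 := by simp [norm_sgnProd, norm_prod]; norm_num)
  rw [Nat.cast_sub hL1, Nat.cast_one] at hbound
  linarith

theorem statement_7_general (N : ℕ) [NeZero N] (hN : Odd N)
    (L : ℕ) (hL1 : 1 ≤ L)
    (S : Finset ℕ) (hS : S ⊆ Finset.Icc 1 L) (hScard : Odd S.card)
    (A : Module.End ℂ (HS N))
    (hA : A = ((S.sort (· ≤ ·)).map (fun k => sigmaX N (k : ZMod N))).prod)
    (c : ℂ) (hc : c = ∏ k ∈ S, (-1 : ℂ) ^ k)
    (k₁ k₂ : ℕ)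
    (p₁ p₂ : ℝ) (hp₁ : p₁ = 2 * Real.pi * k₁ / N) (hp₂ : p₂ = 2 * Real.pi * k₂ / N) :
    ∃ ξ : ℂ,
      braket N (momState N p₁) (A (momState N p₂)) =
        -(c * Complex.exp (-(Complex.I * (p₁ - p₂) / 2))) /
          (N * (Real.cos ((p₁ - p₂) / 2) : ℂ)) + ξ ∧
      ‖ξ‖ ≤ 2 * ((L : ℝ) - 1) / N := by
  subst hA hc
  have hz : exp (I * (p₂ - p₁)) ^ N = 1 := by
    simpa using exp_I_mul_pow_eq_one (N := N) (p := p₂ - p₁) (k := k₂ - k₁)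
      (by rw [hp₁, hp₂]; push_cast; ring)
  have hmain := sum_range_exp_pow_mul_neg_one_pow hN hz
  rw [braket_momState_sortedProd_sigmaX hN]
  set z := exp (I * (p₂ - p₁))
  refine ⟨(N : ℂ)⁻¹ * ∑ j ∈ range N, z ^ (j + 1) *
    (sgnProd S (kinkConfig N ((j + 1 : ℕ) : ZMod N)) - (-1) ^ (j + 1) * ∏ k ∈ S, (-1 : ℂ) ^ k),
    ?_, ?_⟩
  · simp only [mul_sub, sum_sub_distrib, ← mul_assoc, ← sum_mul, hmain]
    ring
  · rw [norm_mul, norm_inv, Complex.norm_natCast, inv_mul_eq_div]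
    gcongr
    exact norm_sum_sgnProd_kinkConfig_sub_le hN hL1 hS hScard
      (norm_eq_one_of_pow_eq_one hz (NeZero.ne N))

/-- For `A = ∏_{k∈S} σ^x_k`, `S ⊆ {1,…,L}` of odd cardinality and
`c = ∏_{k∈S}(−1)^k`, one has
`⟨s_{p₁}|A|s_{p₂}⟩ = −c e^{−i(p₁−p₂)/2}/(N cos((p₁−p₂)/2)) + ξ_N` with `|ξ_N| ≤ 2(L−1)/N`. -/
theorem statement_7 (N : ℕ) [NeZero N] (hN : Odd N)
    (L : ℕ) (hL1 : 1 ≤ L) (hLN : L ≤ N)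
    (S : Finset ℕ) (hS : S ⊆ Finset.Icc 1 L) (hScard : Odd S.card)
    (A : Module.End ℂ (HS N))
    (hA : A = ((S.sort (· ≤ ·)).map (fun k => sigmaX N (k : ZMod N))).prod)
    (c : ℂ) (hc : c = ∏ k ∈ S, (-1 : ℂ) ^ k)
    (k₁ k₂ : ℕ) (hk₁ : k₁ < N) (hk₂ : k₂ < N)
    (p₁ p₂ : ℝ) (hp₁ : p₁ = 2 * Real.pi * k₁ / N) (hp₂ : p₂ = 2 * Real.pi * k₂ / N) :
    ∃ ξ : ℂ,
      braket N (momState N p₁) (A (momState N p₂)) =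
        -(c * Complex.exp (-(Complex.I * (p₁ - p₂) / 2))) /
          (N * (Real.cos ((p₁ - p₂) / 2) : ℂ)) + ξ ∧
      ‖ξ‖ ≤ 2 * ((L : ℝ) - 1) / N :=
  statement_7_general N hN L hL1 S hS hScard A hA c hc k₁ k₂ p₁ p₂ hp₁ hp₂

end SpinChain
end

section
/- Let N be odd and let H be a linear operator on the (finite-dimensional) space H_N that commutes with both Π^x and Π^z. Then every eigenspace of H has even dimension; in particular, if H is Hermitian, its ground state (lowest eigenvalue) is at least two-fold degenerate. -/
open Complex BigOperators Finset

namespace Module.End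

variable {K V : Type*} [Field K] [AddCommGroup V] [Module K V] {A B : Module.End K V}

lemma ker_one_add_eq_eigenspace_neg_one : LinearMap.ker (1 + B) = B.eigenspace (-1) := by
  ext x
  rw [LinearMap.mem_ker, mem_eigenspace_iff, neg_one_smul, LinearMap.add_apply, one_apply,
    add_eq_zero_iff_eq_neg']

lemma range_one_add_eq_eigenspace_one [NeZero (2 : K)] (hB : B * B = 1) :
    LinearMap.range (1 + B) = B.eigenspace 1 := by
  ext x
  rw [LinearMap.mem_range, mem_eigenspace_iff, one_smul]
  constructor
  · rintro ⟨y, rfl⟩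
    rw [LinearMap.add_apply, one_apply, map_add, ← mul_apply, hB, one_apply, add_comm]
  · intro hx
    refine ⟨(2⁻¹ : K) • x, ?_⟩
    rw [LinearMap.add_apply, one_apply, map_smul, hx, ← two_smul K, smul_smul,
      mul_inv_cancel₀ two_ne_zero, one_smul]

lemma finrank_eigenspace_one_eq_finrank_eigenspace_neg_one (hA : A * A = 1)
    (hAB : A * B = -(B * A)) :
    Module.finrank K (B.eigenspace 1) = Module.finrank K (B.eigenspace (-1)) := by
  have hBA : B * A = -(A * B) := by rw [hAB, neg_neg]
  have hmaps : ∀ μ : K, ∀ x ∈ B.eigenspace μ, A x ∈ B.eigenspace (-μ) := fun μ x hx => by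
    rw [mem_eigenspace_iff] at hx ⊢
    rw [← mul_apply, hBA, LinearMap.neg_apply, mul_apply, hx, map_smul, neg_smul]
  have hmapsNegOne : ∀ x ∈ B.eigenspace (-1), A x ∈ B.eigenspace 1 := by
    simpa using hmaps (-1)
  have hAA : ∀ x, A (A x) = x := fun x => by rw [← mul_apply, hA, one_apply]
  exact (LinearEquiv.ofLinearMap (A.restrict (hmaps 1)) (A.restrict hmapsNegOne)
    (LinearMap.ext fun x => Subtype.ext (hAA x))
    (LinearMap.ext fun x => Subtype.ext (hAA x))).finrank_eq

theorem even_finrank_of_involutions_anticommute [NeZero (2 : K)] [FiniteDimensional K V]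
    (hA : A * A = 1) (hB : B * B = 1) (hAB : A * B = -(B * A)) :
    Even (Module.finrank K V) := by
  have h := LinearMap.finrank_range_add_finrank_ker (1 + B)
  rw [range_one_add_eq_eigenspace_one hB, ker_one_add_eq_eigenspace_neg_one,
    finrank_eigenspace_one_eq_finrank_eigenspace_neg_one hA hAB] at h
  exact ⟨_, h.symm⟩

theorem even_finrank_eigenspace_of_commute [NeZero (2 : K)] [FiniteDimensional K V]
    {H : Module.End K V} (hA : A * A = 1) (hB : B * B = 1) (hAB : A * B = -(B * A))
    (hHA : Commute H A) (hHB : Commute H B) (μ : K) :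
    Even (Module.finrank K (H.eigenspace μ)) := by
  have hmapsA := mapsTo_genEigenspace_of_comm hHA μ 1
  have hmapsB := mapsTo_genEigenspace_of_comm hHB μ 1
  refine even_finrank_of_involutions_anticommute (A := A.restrict hmapsA) (B := B.restrict hmapsB)
    ?_ ?_ ?_
  · exact LinearMap.ext fun x => Subtype.ext (LinearMap.congr_fun hA x)
  · exact LinearMap.ext fun x => Subtype.ext (LinearMap.congr_fun hB x)
  · exact LinearMap.ext fun x => Subtype.ext (LinearMap.congr_fun hAB x)

end Module.End

namespace SpinChain

def sites (N : ℕ) : List (ZMod N) :=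
  (List.range N).map fun j => ((j + 1 : ℕ) : ZMod N)

lemma parity_eq_prod_sites (N : ℕ) (α : PKind) :
    parity N α = ((sites N).map (pauli N α)).prod := by
  rw [parity, sites, List.map_map]
  rfl

lemma sites_nodup (N : ℕ) [NeZero N] : (sites N).Nodup := by
  refine List.nodup_range.map_on fun a ha b hb hab => ?_
  rw [List.mem_range] at ha hb
  have hab' : (a : ZMod N) = b := by push_cast at hab; exact add_right_cancel hab
  rw [← ZMod.val_natCast_of_lt ha, ← ZMod.val_natCast_of_lt hb, hab']

lemma mem_sites (N : ℕ) [NeZero N] (k : ZMod N) : k ∈ sites N := by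
  refine List.mem_map.mpr ⟨(k - 1).val, List.mem_range.mpr (ZMod.val_lt _), ?_⟩
  push_cast [ZMod.natCast_val, ZMod.cast_id]
  ring

lemma list_prod_sigmaX_apply (N : ℕ) (L : List (ZMod N)) (f : HS N) (s : Config N) :
    (L.map (sigmaX N)).prod f s = (L.map fun j => sgn (s j)).prod * f s := by
  induction L with
  | nil => simp
  | cons a L ih =>
    change sgn (s a) * (L.map (sigmaX N)).prod f s = _
    rw [ih, List.map_cons, List.prod_cons, mul_assoc]

lemma list_prod_sigmaZ_apply (N : ℕ) (L : List (ZMod N)) (hL : L.Nodup) (f : HS N)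
    (s : Config N) :
    (L.map (sigmaZ N)).prod f s = f fun k => if k ∈ L then !s k else s k := by
  induction L generalizing s with
  | nil => simp
  | cons a L ih =>
    change (L.map (sigmaZ N)).prod f (flipAt N a s) = _
    rw [ih hL.of_cons]
    congr 1
    funext k
    by_cases hk : k = a
    · subst hk
      simp [flipAt, (List.nodup_cons.mp hL).1]
    · simp [flipAt, hk]

noncomputable def spinProduct (N : ℕ) [NeZero N] (s : Config N) : ℂ :=
  ∏ k, sgn (s k)

def flipAll (N : ℕ) (s : Config N) : Config N := fun k => !s k

lemma flipAll_flipAll (N : ℕ) (s : Config N) : flipAll N (flipAll N s) = s :=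
  funext fun k => Bool.not_not (s k)

lemma sgn_mul_self (b : Bool) : sgn b * sgn b = 1 := by cases b <;> simp [sgn]

lemma sgn_not (b : Bool) : sgn (!b) = -sgn b := by cases b <;> simp [sgn]

lemma spinProduct_mul_self (N : ℕ) [NeZero N] (s : Config N) :
    spinProduct N s * spinProduct N s = 1 := by
  simp only [spinProduct, ← prod_mul_distrib, sgn_mul_self, prod_const_one]

lemma spinProduct_flipAll (N : ℕ) [NeZero N] (hN : Odd N) (s : Config N) :
    spinProduct N (flipAll N s) = -spinProduct N s := by
  simp only [spinProduct, flipAll, sgn_not, prod_neg, card_univ, ZMod.card, hN.neg_one_pow,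
    neg_one_mul]

lemma parity_x_apply (N : ℕ) [NeZero N] (f : HS N) (s : Config N) :
    parity N PKind.x f s = spinProduct N s * f s := by
  classical
  rw [parity_eq_prod_sites, pauli, list_prod_sigmaX_apply, spinProduct,
    ← List.prod_toFinset _ (sites_nodup N)]
  congr
  exact Finset.eq_univ_of_forall fun k => List.mem_toFinset.mpr (mem_sites N k)

lemma parity_z_apply (N : ℕ) [NeZero N] (f : HS N) (s : Config N) :
    parity N PKind.z f s = f (flipAll N s) := by
  rw [parity_eq_prod_sites, pauli, list_prod_sigmaZ_apply N _ (sites_nodup N)]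
  simp only [mem_sites, if_true]
  rfl

lemma parity_x_mul_self (N : ℕ) [NeZero N] : parity N PKind.x * parity N PKind.x = 1 :=
  LinearMap.ext fun f => funext fun s => by
    rw [Module.End.mul_apply, parity_x_apply, parity_x_apply, ← mul_assoc,
      spinProduct_mul_self, one_mul, Module.End.one_apply]

lemma parity_z_mul_self (N : ℕ) [NeZero N] : parity N PKind.z * parity N PKind.z = 1 :=
  LinearMap.ext fun f => funext fun s => by
    rw [Module.End.mul_apply, parity_z_apply, parity_z_apply, flipAll_flipAll,
      Module.End.one_apply]

lemma parity_x_mul_parity_z (N : ℕ) [NeZero N] (hN : Odd N) :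
    parity N PKind.x * parity N PKind.z = -(parity N PKind.z * parity N PKind.x) :=
  LinearMap.ext fun f => funext fun s => by
    rw [LinearMap.neg_apply, Module.End.mul_apply, Module.End.mul_apply, Pi.neg_apply,
      parity_x_apply, parity_z_apply, parity_z_apply, parity_x_apply, spinProduct_flipAll N hN,
      neg_mul, neg_neg]

/-- If `H` commutes with `Π^x` and `Π^z` (for `N` odd), every eigenspace of `H`
has even dimension; in particular, if `H` is Hermitian its lowest eigenvalue is at least
two-fold degenerate. -/
theorem statement_9 (N : ℕ) [NeZero N] (hN : Odd N)
    (H : Module.End ℂ (HS N))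
    (hx : H * parity N PKind.x = parity N PKind.x * H)
    (hz : H * parity N PKind.z = parity N PKind.z * H) :
    (∀ μ : ℂ, Even (Module.finrank ℂ (Module.End.eigenspace H μ))) ∧
    ((∀ f g : HS N, braket N (H f) g = braket N f (H g)) →
      ∀ μ : ℂ, Module.End.HasEigenvalue H μ →
        (∀ μ' : ℂ, Module.End.HasEigenvalue H μ' → μ.re ≤ μ'.re) →
        2 ≤ Module.finrank ℂ (Module.End.eigenspace H μ)) := by
  have heven := Module.End.even_finrank_eigenspace_of_commute (parity_x_mul_self N)
    (parity_z_mul_self N) (parity_x_mul_parity_z N hN) hx hz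
  refine ⟨heven, fun _ μ hμ _ => ?_⟩
  have : Nontrivial (Module.End.eigenspace H μ) :=
    Submodule.nontrivial_iff_ne_bot.mpr (Module.End.hasEigenvalue_iff.mp hμ)
  obtain ⟨k, hk⟩ := heven μ
  have := Module.finrank_pos (R := ℂ) (M := Module.End.eigenspace H μ)
  omega

end SpinChain
end
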